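/- Let A be an Arens regular Banach algebra such that every derivation from A** into A* is weak*-to-weak* continuous. If A is weakly amenable, then every continuous derivation from A** into A* is inner. -/

import Mathlib

open ContinuousLinearMap NormedSpace

namespace NormedSpace

/-- The topological dual of a seminormed space `E` (removed from Mathlib, restored with its old definition). -/
abbrev Dual (𝕜 : Type*) [NontriviallyNormedField 𝕜] (E : Type*) [SeminormedAddCommGroup E]
    [NormedSpace 𝕜 E] : Type _ :=
  E →L[𝕜] 𝕜

end NormedSpace

noncomputable section

section Defs

variable {X Y Z W : Type} [NormedAddCommGroup X] [NormedSpace ℝ X]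
  [NormedAddCommGroup Y] [NormedSpace ℝ Y] [NormedAddCommGroup Z] [NormedSpace ℝ Z]
  [NormedAddCommGroup W] [NormedSpace ℝ W]

/-- The first adjoint `m^*` of a bounded bilinear map `m : X × Y → Z`,
as a map `Z^* × X → Y^*`, `⟨m^*(z',x), y⟩ = ⟨z', m(x,y)⟩`. -/
def adj1 (m : X →L[ℝ] Y →L[ℝ] Z) :
    Dual ℝ Z →L[ℝ] X →L[ℝ] Dual ℝ Y :=
  (((ContinuousLinearMap.compL ℝ X (Y →L[ℝ] Z) (Dual ℝ Y)).flip m).comp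
    (ContinuousLinearMap.compL ℝ Y Z ℝ))

@[simp] lemma adj1_apply (m : X →L[ℝ] Y →L[ℝ] Z) (z' : Dual ℝ Z) (x : X) (y : Y) :
    adj1 m z' x y = z' (m x y) := rfl

/-- The first (left) Arens extension `m^{***} : X^{**} × Y^{**} → Z^{**}` of a
bounded bilinear map `m : X × Y → Z`. -/
def arens (m : X →L[ℝ] Y →L[ℝ] Z) :
    Dual ℝ (Dual ℝ X) →L[ℝ] Dual ℝ (Dual ℝ Y) →L[ℝ] Dual ℝ (Dual ℝ Z) :=
  adj1 (adj1 (adj1 m))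

/-- The adjoint (dual map) of a bounded linear map. -/
def dualMap' (D : X →L[ℝ] Y) : Dual ℝ Y →L[ℝ] Dual ℝ X :=
  (ContinuousLinearMap.compL ℝ X Y ℝ).flip D

@[simp] lemma dualMap'_apply (D : X →L[ℝ] Y) (g : Dual ℝ Y) (x : X) :
    dualMap' D g x = g (D x) := rfl

/-- The second adjoint `D'' : X^{**} → Y^{**}` of a bounded linear map. -/
def bidualMap (D : X →L[ℝ] Y) : Dual ℝ (Dual ℝ X) →L[ℝ] Dual ℝ (Dual ℝ Y) :=
  dualMap' (dualMap' D)

/-- Given an action `t : A × X → X`, the transposed action on the dual `X^*`: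
`(dualAct t) a f = f ∘ (t a)`. -/
def dualAct (t : W →L[ℝ] X →L[ℝ] X) : W →L[ℝ] Dual ℝ X →L[ℝ] Dual ℝ X :=
  ((ContinuousLinearMap.compL ℝ X X ℝ).flip).comp t

@[simp] lemma dualAct_apply (t : W →L[ℝ] X →L[ℝ] X) (a : W) (f : Dual ℝ X) (x : X) :
    dualAct t a f x = f (t a x) := rfl

/-- `D : A → X` is a derivation with respect to the multiplication `mul'` on `A`
and the left action `l` and right action `r` (`r a x` means `x · a`) of `A` on `X`. -/
def IsDer {A' : Type} [NormedAddCommGroup A'] [NormedSpace ℝ A']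
    (mul' : A' →L[ℝ] A' →L[ℝ] A') (l r : A' →L[ℝ] X →L[ℝ] X) (D : A' →L[ℝ] X) : Prop :=
  ∀ a b : A', D (mul' a b) = l a (D b) + r b (D a)

/-- `D : A → X` is an inner derivation: `D a = a·x - x·a` for some `x`. -/
def IsInner {A' : Type} [NormedAddCommGroup A'] [NormedSpace ℝ A']
    (l r : A' →L[ℝ] X →L[ℝ] X) (D : A' →L[ℝ] X) : Prop :=
  ∃ x : X, ∀ a : A', D a = l a x - r a x

/-- The bimodule axioms for actions `l`, `r` of an algebra with multiplication `mul'`. -/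
def IsBimod {A' : Type} [NormedAddCommGroup A'] [NormedSpace ℝ A']
    (mul' : A' →L[ℝ] A' →L[ℝ] A') (l r : A' →L[ℝ] X →L[ℝ] X) : Prop :=
  (∀ a b x, l (mul' a b) x = l a (l b x)) ∧
  (∀ a b x, r (mul' a b) x = r b (r a x)) ∧
  (∀ a b x, l a (r b x) = r b (l a x))

/-- weak*-to-weak* continuity of a map between dual spaces. -/
def WStarCont (f : Dual ℝ X → Dual ℝ Y) : Prop :=
  ∀ y : Y, Continuous fun φ : WeakDual ℝ X => f φ y

end Defs

/-- A packaged Banach `A`-bimodule (used to form iterated duals). -/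
structure ModPk (A : Type) [NormedAddCommGroup A] [NormedSpace ℝ A] : Type 1 where
  X : Type
  [grp : NormedAddCommGroup X]
  [mod : NormedSpace ℝ X]
  l : A →L[ℝ] X →L[ℝ] X
  r : A →L[ℝ] X →L[ℝ] X

attribute [instance] ModPk.grp ModPk.mod

variable {A : Type} [NormedAddCommGroup A] [NormedSpace ℝ A]

/-- The canonical dual of a packaged bimodule. -/
def ModPk.dual (P : ModPk A) : ModPk A :=
  ⟨Dual ℝ P.X, dualAct P.r, dualAct P.l⟩

/-- The `n`-th iterated dual of a packaged bimodule. -/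
def ModPk.iter (P : ModPk A) : ℕ → ModPk A
  | 0 => P
  | n+1 => (P.iter n).dual

/-- A "level": an algebra (given by its bilinear multiplication) together with a bimodule. -/
structure Lvl : Type 1 where
  Alg : Type
  [g1 : NormedAddCommGroup Alg]
  [m1 : NormedSpace ℝ Alg]
  Mod : Type
  [g2 : NormedAddCommGroup Mod]
  [m2 : NormedSpace ℝ Mod]
  mul : Alg →L[ℝ] Alg →L[ℝ] Alg
  l : Alg →L[ℝ] Mod →L[ℝ] Mod
  r : Alg →L[ℝ] Mod →L[ℝ] Mod

attribute [instance] Lvl.g1 Lvl.m1 Lvl.g2 Lvl.m2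

/-- Passing to second duals: `A^{**}` with the first Arens product, acting on `B^{**}`
via the Arens extensions `π_ℓ^{***}` and `π_r^{***}` of the module actions. -/
def Lvl.double (Q : Lvl) : Lvl where
  Alg := Dual ℝ (Dual ℝ Q.Alg)
  Mod := Dual ℝ (Dual ℝ Q.Mod)
  mul := arens Q.mul
  l := arens Q.l
  r := (arens Q.r.flip).flip

/-- Iterated even duals: `Lvl.iter Q n` is the level `(A^{(2n)}, B^{(2n)})`. -/
def Lvl.iter (Q : Lvl) : ℕ → Lvl
  | 0 => Q
  | n+1 => (Q.iter n).double

/-- The canonical embedding `A → A^{(2n)}`. -/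
def Lvl.embA (Q : Lvl) : (n : ℕ) → Q.Alg →L[ℝ] (Q.iter n).Alg
  | 0 => ContinuousLinearMap.id ℝ _
  | n+1 => (inclusionInDoubleDual ℝ ((Q.iter n).Alg)).comp (Q.embA n)

/-- The canonical embedding `B → B^{(2n)}`. -/
def Lvl.embM (Q : Lvl) : (n : ℕ) → Q.Mod →L[ℝ] (Q.iter n).Mod
  | 0 => ContinuousLinearMap.id ℝ _
  | n+1 => (inclusionInDoubleDual ℝ ((Q.iter n).Mod)).comp (Q.embM n)

/-- The left-topological-center condition `Z^ℓ_{A^{(2n+2)}}(B^{(2n+2)}) = B^{(2n+2)}`,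
stated at the double of a level `Q`: for each `b` in the second-dual module, the map
`a ↦ b·a` is weak*-to-weak* continuous. -/
def Lvl.doubleZl (Q : Lvl) : Prop :=
  ∀ b : (Q.double).Mod, WStarCont (X := Dual ℝ Q.Alg) (Y := Dual ℝ Q.Mod)
    (fun a => (Q.double).r a b)

/-- The base level of a Banach algebra `A` with a Banach `A`-bimodule `B`. -/
def lvlOf (A : Type) [NormedRing A] [NormedAlgebra ℝ A]
    (B : Type) [NormedAddCommGroup B] [NormedSpace ℝ B]
    (l r : A →L[ℝ] B →L[ℝ] B) : Lvl :=
  Lvl.mk A B (ContinuousLinearMap.mul ℝ A) l r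

/-!
Restricted to `A`, a derivation `D : A** → A*` is a derivation `A → A*`, hence inner,
implemented by some `f ∈ A*`. The map `F ↦ F·f - f·F` into `A*` is weak*-continuous, and so is
`D` by hypothesis; the two agree on `A`, which is weak*-dense in `A**`, so they coincide.
Arens regularity makes `f·F`, computed in `A***`, the image of the functional `f·F ∈ A*`.
-/

section WeakStar

variable {X Y : Type} [NormedAddCommGroup X] [NormedSpace ℝ X]
  [NormedAddCommGroup Y] [NormedSpace ℝ Y]

theorem exists_eq_apply_of_continuous_weakDual (φ : WeakDual ℝ X →ₗ[ℝ] ℝ)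
    (hφ : Continuous φ) :
    ∃ x : X, ∀ F : Dual ℝ X, φ F = F x := by
  obtain ⟨x, hx⟩ := LinearMap.dualEmbedding_surjective (topDualPairing ℝ X)
    (⟨φ, hφ⟩ : StrongDual ℝ (WeakBilin (topDualPairing ℝ X)))
  exact ⟨x, fun F => (DFunLike.congr_fun hx F).symm⟩

theorem eq_zero_of_weakStar_continuous_of_apply_inclusion (φ : Dual ℝ (Dual ℝ (Dual ℝ X)))
    (hφ : Continuous fun F : WeakDual ℝ (Dual ℝ X) => φ F)
    (h : ∀ x, φ (inclusionInDoubleDual ℝ X x) = 0) : φ = 0 := by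
  obtain ⟨f, hf⟩ := exists_eq_apply_of_continuous_weakDual
    (φ.toLinearMap : WeakDual ℝ (Dual ℝ X) →ₗ[ℝ] ℝ) hφ
  have hf0 : f = 0 := by
    ext x
    exact (hf _).symm.trans (h x)
  ext F
  exact (hf F).trans (by simp [hf0])

theorem eq_of_weakStar_continuous_of_eq_on_inclusion
    (S T : Dual ℝ (Dual ℝ X) →L[ℝ] Dual ℝ Y)
    (hS : ∀ y, Continuous fun F : WeakDual ℝ (Dual ℝ X) => S F y)
    (hT : ∀ y, Continuous fun F : WeakDual ℝ (Dual ℝ X) => T F y)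
    (h : ∀ x, S (inclusionInDoubleDual ℝ X x) = T (inclusionInDoubleDual ℝ X x)) : S = T := by
  ext F y
  have hzero := eq_zero_of_weakStar_continuous_of_apply_inclusion
    ((ContinuousLinearMap.apply ℝ ℝ y).comp (S - T)) ((hS y).sub (hT y))
    (fun x => by simp [h x])
  exact sub_eq_zero.mp (DFunLike.congr_fun hzero F)

end WeakStar

section ArensDerivation

variable {X : Type} [NormedAddCommGroup X] [NormedSpace ℝ X] (m : X →L[ℝ] X →L[ℝ] X)

theorem isDer_comp_inclusionInDoubleDual (D : Dual ℝ (Dual ℝ X) →L[ℝ] Dual ℝ X)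
    (hD : IsDer (arens m)
      (dualAct (W := Dual ℝ (Dual ℝ X)) (X := Dual ℝ (Dual ℝ X)) (arens m).flip)
      (dualAct (W := Dual ℝ (Dual ℝ X)) (X := Dual ℝ (Dual ℝ X)) (arens m))
      ((inclusionInDoubleDual ℝ (Dual ℝ X)).comp D)) :
    IsDer m (dualAct m.flip) (dualAct m) (D.comp (inclusionInDoubleDual ℝ X)) := by
  intro a b
  ext c
  exact DFunLike.congr_fun
    (hD (inclusionInDoubleDual ℝ X a) (inclusionInDoubleDual ℝ X b))
    (inclusionInDoubleDual ℝ X c)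

/-- `F ↦ F·f - f·F`, where `adj1 (adj1 m) F f = F·f` and `adj1 (adj1 m.flip) F f = f·F`. -/
def arensInnerDer (f : Dual ℝ X) : Dual ℝ (Dual ℝ X) →L[ℝ] Dual ℝ X :=
  (adj1 (adj1 m)).flip f - (adj1 (adj1 m.flip)).flip f

theorem arensInnerDer_inclusionInDoubleDual (f : Dual ℝ X) (a : X) :
    arensInnerDer m f (inclusionInDoubleDual ℝ X a) = dualAct m.flip a f - dualAct m a f :=
  rfl

theorem arensInnerDer_weakStar_continuous (f : Dual ℝ X) (a : X) :
    Continuous fun F : WeakDual ℝ (Dual ℝ X) => arensInnerDer m f F a :=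
  (WeakDual.eval_continuous _).sub (WeakDual.eval_continuous _)

theorem inclusionInDoubleDual_arensInnerDer (hreg : ∀ F G, arens m F G = arens m.flip G F)
    (f : Dual ℝ X) (F : Dual ℝ (Dual ℝ X)) :
    inclusionInDoubleDual ℝ (Dual ℝ X) (arensInnerDer m f F) =
      dualAct (W := Dual ℝ (Dual ℝ X)) (X := Dual ℝ (Dual ℝ X)) (arens m).flip F
          (inclusionInDoubleDual ℝ (Dual ℝ X) f) -
        dualAct (W := Dual ℝ (Dual ℝ X)) (X := Dual ℝ (Dual ℝ X)) (arens m) F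
          (inclusionInDoubleDual ℝ (Dual ℝ X) f) := by
  ext H
  change H (arensInnerDer m f F) = arens m H F f - arens m F H f
  rw [hreg F H, arensInnerDer, sub_apply, map_sub]
  rfl

end ArensDerivation

theorem stmt13_general (A : Type) [NormedRing A] [NormedAlgebra ℝ A]
    -- `A` is Arens regular
    (hreg : ∀ F G, arens (ContinuousLinearMap.mul ℝ A) F G =
      arens (ContinuousLinearMap.mul ℝ A).flip G F)
    -- every derivation `A** → A*` is weak*-to-weak* continuous
    (hwcont : ∀ D : Dual ℝ (Dual ℝ A) →L[ℝ] Dual ℝ A,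
      (∀ F G : Dual ℝ (Dual ℝ A),
        inclusionInDoubleDual ℝ (Dual ℝ A) (D (arens (ContinuousLinearMap.mul ℝ A) F G)) =
          dualAct (W := Dual ℝ (Dual ℝ A)) (X := Dual ℝ (Dual ℝ A))
            ((arens (ContinuousLinearMap.mul ℝ A).flip.flip).flip) F
            (inclusionInDoubleDual ℝ (Dual ℝ A) (D G)) +
          dualAct (W := Dual ℝ (Dual ℝ A)) (X := Dual ℝ (Dual ℝ A))
            (arens (ContinuousLinearMap.mul ℝ A)) G
            (inclusionInDoubleDual ℝ (Dual ℝ A) (D F))) →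
      ∀ a : A, Continuous fun F : WeakDual ℝ (Dual ℝ A) => D F a)
    -- `A` is weakly amenable
    (hwa : ∀ D : A →L[ℝ] Dual ℝ A,
      IsDer (ContinuousLinearMap.mul ℝ A)
        (dualAct (ContinuousLinearMap.mul ℝ A).flip) (dualAct (ContinuousLinearMap.mul ℝ A)) D →
      IsInner (dualAct (ContinuousLinearMap.mul ℝ A).flip) (dualAct (ContinuousLinearMap.mul ℝ A)) D) :
    -- `H¹(A**, A*) = 0`
    ∀ D : Dual ℝ (Dual ℝ A) →L[ℝ] Dual ℝ A,
      (∀ F G : Dual ℝ (Dual ℝ A),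
        inclusionInDoubleDual ℝ (Dual ℝ A) (D (arens (ContinuousLinearMap.mul ℝ A) F G)) =
          dualAct (W := Dual ℝ (Dual ℝ A)) (X := Dual ℝ (Dual ℝ A))
            ((arens (ContinuousLinearMap.mul ℝ A).flip.flip).flip) F
            (inclusionInDoubleDual ℝ (Dual ℝ A) (D G)) +
          dualAct (W := Dual ℝ (Dual ℝ A)) (X := Dual ℝ (Dual ℝ A))
            (arens (ContinuousLinearMap.mul ℝ A)) G
            (inclusionInDoubleDual ℝ (Dual ℝ A) (D F))) →
      ∃ a' : Dual ℝ A, ∀ F : Dual ℝ (Dual ℝ A),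
        inclusionInDoubleDual ℝ (Dual ℝ A) (D F) =
          dualAct (W := Dual ℝ (Dual ℝ A)) (X := Dual ℝ (Dual ℝ A))
            ((arens (ContinuousLinearMap.mul ℝ A).flip.flip).flip) F
            (inclusionInDoubleDual ℝ (Dual ℝ A) a') -
          dualAct (W := Dual ℝ (Dual ℝ A)) (X := Dual ℝ (Dual ℝ A))
            (arens (ContinuousLinearMap.mul ℝ A)) F
            (inclusionInDoubleDual ℝ (Dual ℝ A) a') := by
  intro D hD
  obtain ⟨f, hf⟩ := hwa _ (isDer_comp_inclusionInDoubleDual _ D hD)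
  have hDf : D = arensInnerDer (ContinuousLinearMap.mul ℝ A) f :=
    eq_of_weakStar_continuous_of_eq_on_inclusion _ _ (hwcont D hD)
      (arensInnerDer_weakStar_continuous _ f)
      (fun a => (hf a).trans (arensInnerDer_inclusionInDoubleDual _ f a).symm)
  exact ⟨f, fun F => hDf ▸ inclusionInDoubleDual_arensInnerDer _ hreg f F⟩

/-- **Corollary 2-18.** Let `A` be an Arens regular Banach algebra such that every
derivation `A** → A*` is weak*-to-weak* continuous. If `A` is weakly amenable, then
every continuous derivation `A** → A*` is inner (identities read in `A***` via the
canonical embedding `A* → A***`). -/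
theorem stmt13 (A : Type) [NormedRing A] [NormedAlgebra ℝ A] [CompleteSpace A]
    -- `A` is Arens regular
    (hreg : ∀ F G, arens (ContinuousLinearMap.mul ℝ A) F G =
      arens (ContinuousLinearMap.mul ℝ A).flip G F)
    -- every derivation `A** → A*` is weak*-to-weak* continuous
    (hwcont : ∀ D : Dual ℝ (Dual ℝ A) →L[ℝ] Dual ℝ A,
      (∀ F G : Dual ℝ (Dual ℝ A),
        inclusionInDoubleDual ℝ (Dual ℝ A) (D (arens (ContinuousLinearMap.mul ℝ A) F G)) =
          dualAct (W := Dual ℝ (Dual ℝ A)) (X := Dual ℝ (Dual ℝ A))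
            ((arens (ContinuousLinearMap.mul ℝ A).flip.flip).flip) F
            (inclusionInDoubleDual ℝ (Dual ℝ A) (D G)) +
          dualAct (W := Dual ℝ (Dual ℝ A)) (X := Dual ℝ (Dual ℝ A))
            (arens (ContinuousLinearMap.mul ℝ A)) G
            (inclusionInDoubleDual ℝ (Dual ℝ A) (D F))) →
      ∀ a : A, Continuous fun F : WeakDual ℝ (Dual ℝ A) => D F a)
    -- `A` is weakly amenable
    (hwa : ∀ D : A →L[ℝ] Dual ℝ A,
      IsDer (ContinuousLinearMap.mul ℝ A)
        (dualAct (ContinuousLinearMap.mul ℝ A).flip) (dualAct (ContinuousLinearMap.mul ℝ A)) D →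
      IsInner (dualAct (ContinuousLinearMap.mul ℝ A).flip) (dualAct (ContinuousLinearMap.mul ℝ A)) D) :
    -- `H¹(A**, A*) = 0`
    ∀ D : Dual ℝ (Dual ℝ A) →L[ℝ] Dual ℝ A,
      (∀ F G : Dual ℝ (Dual ℝ A),
        inclusionInDoubleDual ℝ (Dual ℝ A) (D (arens (ContinuousLinearMap.mul ℝ A) F G)) =
          dualAct (W := Dual ℝ (Dual ℝ A)) (X := Dual ℝ (Dual ℝ A))
            ((arens (ContinuousLinearMap.mul ℝ A).flip.flip).flip) F
            (inclusionInDoubleDual ℝ (Dual ℝ A) (D G)) +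
          dualAct (W := Dual ℝ (Dual ℝ A)) (X := Dual ℝ (Dual ℝ A))
            (arens (ContinuousLinearMap.mul ℝ A)) G
            (inclusionInDoubleDual ℝ (Dual ℝ A) (D F))) →
      ∃ a' : Dual ℝ A, ∀ F : Dual ℝ (Dual ℝ A),
        inclusionInDoubleDual ℝ (Dual ℝ A) (D F) =
          dualAct (W := Dual ℝ (Dual ℝ A)) (X := Dual ℝ (Dual ℝ A))
            ((arens (ContinuousLinearMap.mul ℝ A).flip.flip).flip) F
            (inclusionInDoubleDual ℝ (Dual ℝ A) a') -
          dualAct (W := Dual ℝ (Dual ℝ A)) (X := Dual ℝ (Dual ℝ A))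
            (arens (ContinuousLinearMap.mul ℝ A)) F
            (inclusionInDoubleDual ℝ (Dual ℝ A) a') :=
  stmt13_general A hreg hwcont hwa
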